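/- In a partial category, for every morphism f : A → B and every V ≤ B, the square with top morphism f ↑ V : A ↑_f V → V, left morphism m' := id_A ↓ (A ↑_f V) : A ↑_f V → A, right morphism m := id_B ↓ V : V → B, and bottom morphism f : A → B is a pullback diagram. -/
import Mathlib


open CategoryTheory CategoryTheory.Limits

universe v u

/-- A partial structure on a category `C` (composition written diagrammatically,
`f ≫ g`): a partial order `≤` on objects, a restriction operator `f ↓ U` (here `res`),
and a contraction operator `A ↑_f V`, `f ↑ V` (here `ctrObj`, `ctr`), satisfying the
axioms (P.1)–(P.8). -/
structure PartialStructure (C : Type u) [Category.{v} C] where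
  le : C → C → Prop
  le_refl : ∀ A : C, le A A
  le_trans : ∀ {A B D : C}, le A B → le B D → le A D
  le_antisymm : ∀ {A B : C}, le A B → le B A → A = B
  /-- The restriction operator: for `f : A ⟶ B` and `U ≤ A`, `f ↓ U : U ⟶ B`. -/
  res : ∀ {A B : C}, (A ⟶ B) → ∀ {U : C}, le U A → (U ⟶ B)
  /-- The contraction object: for `f : A ⟶ B` and `V ≤ B`, the object `A ↑_f V`. -/
  ctrObj : ∀ {A B : C}, (A ⟶ B) → ∀ {V : C}, le V B → C
  ctrObj_le : ∀ {A B : C} (f : A ⟶ B) {V : C} (h : le V B), le (ctrObj f h) A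
  /-- The contraction morphism `f ↑ V : A ↑_f V ⟶ V`. -/
  ctr : ∀ {A B : C} (f : A ⟶ B) {V : C} (h : le V B), (ctrObj f h ⟶ V)
  P1 : ∀ {A B : C} (f : A ⟶ B), res f (le_refl A) = f
  P2 : ∀ {A B : C} (f : A ⟶ B) {U V : C} (hU : le U A) (hV : le V U),
      res (res f hU) hV = res f (le_trans hV hU)
  P3 : ∀ {A B D : C} (f : A ⟶ B) (g : B ⟶ D) {U : C} (h : le U A),
      res f h ≫ g = res (f ≫ g) h
  P4a : ∀ {A B : C} (f : A ⟶ B), ctrObj f (le_refl B) = A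
  P4b : ∀ {A B : C} (f : A ⟶ B), ctr f (le_refl B) = eqToHom (P4a f) ≫ f
  P4'a : ∀ {A U : C} (h : le U A), ctrObj (𝟙 A) h = U
  P4'b : ∀ {A U : C} (h : le U A), ctr (𝟙 A) h = eqToHom (P4'a h)
  P5a : ∀ {A B : C} (f : A ⟶ B) {V W : C} (hV : le V B) (hW : le W V),
      ctrObj (ctr f hV) hW = ctrObj f (le_trans hW hV)
  P5b : ∀ {A B : C} (f : A ⟶ B) {V W : C} (hV : le V B) (hW : le W V),
      ctr (ctr f hV) hW = eqToHom (P5a f hV hW) ≫ ctr f (le_trans hW hV)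
  P6a : ∀ {A B D : C} (f : A ⟶ B) (g : B ⟶ D) {W : C} (hW : le W D),
      ctrObj f (ctrObj_le g hW) = ctrObj (f ≫ g) hW
  P6b : ∀ {A B D : C} (f : A ⟶ B) (g : B ⟶ D) {W : C} (hW : le W D),
      ctr f (ctrObj_le g hW) ≫ ctr g hW = eqToHom (P6a f g hW) ≫ ctr (f ≫ g) hW
  P7a : ∀ {A B : C} (f : A ⟶ B) {V : C} (hV : le V B),
      ctrObj (res f (ctrObj_le f hV)) hV = ctrObj f hV
  P7b : ∀ {A B : C} (f : A ⟶ B) {V : C} (hV : le V B),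
      ctr (res f (ctrObj_le f hV)) hV = eqToHom (P7a f hV) ≫ ctr f hV
  P8 : ∀ {A B D : C} (f : A ⟶ B) (g : B ⟶ D) {V : C} (hV : le V B),
      res (f ≫ g) (ctrObj_le f hV) = ctr f hV ≫ res g hV

variable {C : Type u} [Category.{v} C]

namespace PartialStructure

variable {C : Type u} [Category.{v} C] (P : PartialStructure C)

lemma res_cast {A B U U' : C} (f : A ⟶ B) (e : U' = U) (h' : P.le U' A) (h : P.le U A) :
    P.res f h' = eqToHom e ≫ P.res f h := by subst e; simp

lemma ctrObj_cast {A B V V' : C} (f : A ⟶ B) (e : V' = V) (h' : P.le V' B) (h : P.le V B) :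
    P.ctrObj f h' = P.ctrObj f h := by subst e; rfl

lemma ctr_cast {A B V V' : C} (f : A ⟶ B) (e : V' = V) (h' : P.le V' B) (h : P.le V B) :
    P.ctr f h' = eqToHom (P.ctrObj_cast f e h' h) ≫ P.ctr f h ≫ eqToHom e.symm := by
  subst e; simp

lemma ctr_congr {A B V : C} {f g : A ⟶ B} (e : f = g) (h : P.le V B) :
    P.ctrObj f h = P.ctrObj g h := by subst e; rfl

lemma ctr_congr' {A B V : C} {f g : A ⟶ B} (e : f = g) (h : P.le V B) :
    P.ctr f h = eqToHom (P.ctr_congr e h) ≫ P.ctr g h := by subst e; simp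

lemma eqToHom_comp_ctrObj {A A' B V : C} (e : A' = A) (g : A ⟶ B) (h : P.le V B) :
    P.ctrObj (eqToHom e ≫ g) h = P.ctrObj g h := by subst e; simp

lemma eqToHom_comp_ctr {A A' B V : C} (e : A' = A) (g : A ⟶ B) (h : P.le V B) :
    P.ctr (eqToHom e ≫ g) h = eqToHom (P.eqToHom_comp_ctrObj e g h) ≫ P.ctr g h := by
  subst e
  exact P.ctr_congr' (by simp) h

lemma ctrObj_res_id {A U : C} (h : P.le U A) :
    P.ctrObj (P.res (𝟙 A) h) h = U := by
  have e : P.ctrObj (𝟙 A) h = U := P.P4'a h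
  have h7 := P.P7a (𝟙 A) h
  rw [P.res_cast (𝟙 A) e (P.ctrObj_le (𝟙 A) h) h, P.eqToHom_comp_ctrObj] at h7
  rw [h7, e]

lemma ctr_res_id {A U : C} (h : P.le U A) :
    P.ctr (P.res (𝟙 A) h) h = eqToHom (P.ctrObj_res_id h) := by
  have e : P.ctrObj (𝟙 A) h = U := P.P4'a h
  have h7 := P.P7b (𝟙 A) h
  have c : P.ctr (P.res (𝟙 A) (P.ctrObj_le (𝟙 A) h)) h =
      eqToHom _ ≫ eqToHom _ ≫ P.ctr (P.res (𝟙 A) h) h :=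
    (P.ctr_congr' (P.res_cast (𝟙 A) e (P.ctrObj_le (𝟙 A) h) h) h).trans
      (by rw [P.eqToHom_comp_ctr e (P.res (𝟙 A) h) h])
  have E := c.symm.trans h7
  rw [P.P4'b] at E
  rw [eqToHom_comp_iff, eqToHom_comp_iff] at E
  rw [E]
  simp [eqToHom_trans]

lemma ctrObj_comp_res_id {X A U : C} (u : X ⟶ U) (h : P.le U A) :
    P.ctrObj (u ≫ P.res (𝟙 A) h) h = X := by
  rw [← P.P6a u (P.res (𝟙 A) h) h,
    P.ctrObj_cast u (P.ctrObj_res_id h) (P.ctrObj_le (P.res (𝟙 A) h) h) (P.le_refl U),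
    P.P4a]

lemma ctr_comp_res_id {X A U : C} (u : X ⟶ U) (h : P.le U A) :
    P.ctr (u ≫ P.res (𝟙 A) h) h = eqToHom (P.ctrObj_comp_res_id u h) ≫ u := by
  have h6 := P.P6b u (P.res (𝟙 A) h) h
  rw [P.ctr_cast u (P.ctrObj_res_id h) (P.ctrObj_le (P.res (𝟙 A) h) h) (P.le_refl U),
    P.P4b, P.ctr_res_id] at h6
  replace h6 := (eqToHom_comp_iff _ _ _).mp h6.symm
  rw [h6]
  simp [eqToHom_trans]

lemma mono_res_id {A U : C} (h : P.le U A) : Mono (P.res (𝟙 A) h) := by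
  constructor
  intro X u₁ u₂ hu
  have h1 := P.ctr_comp_res_id u₁ h
  have h2 := P.ctr_comp_res_id u₂ h
  rw [P.ctr_congr' hu h, h2] at h1
  replace h1 := (eqToHom_comp_iff _ _ _).mp h1
  simp only [← Category.assoc, eqToHom_trans] at h1
  exact ((cancel_epi (eqToHom (P.ctrObj_comp_res_id u₂ h))).mp h1).symm

lemma lift_eq {X A B V : C} (f : A ⟶ B) (hV : P.le V B) (t : X ⟶ A) (u : X ⟶ V)
    (w : u ≫ P.res (𝟙 B) hV = t ≫ f) :
    P.ctrObj t (P.ctrObj_le f hV) = X := by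
  rw [P.P6a t f hV, P.ctr_congr w.symm hV]
  exact P.ctrObj_comp_res_id u hV

lemma lift_fac_left {X A B V : C} (f : A ⟶ B) (hV : P.le V B) (t : X ⟶ A) (u : X ⟶ V)
    (w : u ≫ P.res (𝟙 B) hV = t ≫ f) :
    eqToHom (P.lift_eq f hV t u w).symm ≫ P.ctr t (P.ctrObj_le f hV) ≫ P.ctr f hV = u := by
  rw [P.P6b t f hV, P.ctr_congr' w.symm hV, P.ctr_comp_res_id u hV]
  simp

lemma lift_fac_right {X A B V : C} (f : A ⟶ B) (hV : P.le V B) (t : X ⟶ A) (u : X ⟶ V)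
    (w : u ≫ P.res (𝟙 B) hV = t ≫ f) :
    eqToHom (P.lift_eq f hV t u w).symm ≫ P.ctr t (P.ctrObj_le f hV) ≫
      P.res (𝟙 A) (P.ctrObj_le f hV) = t := by
  rw [← P.P8 t (𝟙 A) (P.ctrObj_le f hV),
    P.res_cast (t ≫ 𝟙 A) (P.lift_eq f hV t u w)
      (P.ctrObj_le t (P.ctrObj_le f hV)) (P.le_refl X),
    Category.comp_id, P.P1]
  simp

end PartialStructure

/-- **Statement 18.** In a partial category, for every `f : A ⟶ B` and `V ≤ B`, the
square with top morphism `f ↑ V : A ↑_f V ⟶ V`, left morphism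
`m' := id_A ↓ (A ↑_f V) : A ↑_f V ⟶ A`, right morphism `m := id_B ↓ V : V ⟶ B` and
bottom morphism `f : A ⟶ B` is a pullback diagram. -/
theorem statement18 (P : PartialStructure C) {A B : C} (f : A ⟶ B) {V : C}
    (hV : P.le V B) :
    IsPullback (P.ctr f hV) (P.res (𝟙 A) (P.ctrObj_le f hV)) (P.res (𝟙 B) hV) f := by
  have comm : P.ctr f hV ≫ P.res (𝟙 B) hV = P.res (𝟙 A) (P.ctrObj_le f hV) ≫ f := by
    rw [P.P3, Category.id_comp, ← P.P8 f (𝟙 B) hV, Category.comp_id]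
  apply IsPullback.of_isLimit' ⟨comm⟩
  haveI := P.mono_res_id (P.ctrObj_le f hV)
  exact PullbackCone.IsLimit.mk comm
    (fun s => eqToHom (P.lift_eq f hV s.snd s.fst s.condition).symm ≫
      P.ctr s.snd (P.ctrObj_le f hV))
    (fun s => by rw [Category.assoc]; exact P.lift_fac_left f hV s.snd s.fst s.condition)
    (fun s => by rw [Category.assoc]; exact P.lift_fac_right f hV s.snd s.fst s.condition)
    (fun s m hm1 hm2 => by
      rw [← cancel_mono (P.res (𝟙 A) (P.ctrObj_le f hV)), hm2, Category.assoc,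
        P.lift_fac_right f hV s.snd s.fst s.condition])
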